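/- arXiv:2301.05636 — 6 statements merged into one kernel-verified Lean document; each statement's English description precedes it below -/
import Mathlib

section
/- Let f be a probability density on ℝ and let S ⊆ ℝ be measurable with ∫_S f > 0. Define the conditional p-value P(x) = (∫_{S ∩ {y : |y| ≥ |x|}} f) / (∫_S f). If φ is a random variable with density f conditioned on φ ∈ S, then for all α ∈ [0,1], Pr(P(φ) ≤ α) ≤ α, i.e. P(φ) is stochastically bounded below by a uniform random variable. -/
/-!
Write `c = α ∫_S f`. A point `x` satisfies `P x ≤ α` iff the upper tail `{y ∈ S : |x| ≤ |y|}`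
has mass at most `c`, so the event `P(φ) ≤ α` is covered by a nested family of such tails.
If the infimum `a` of the thresholds is attained, the union is the tail at `a`; otherwise it is
`{a < |y|}`, whose mass is the supremum of the tail masses above `a` by continuity from below.
-/

open MeasureTheory Set

section UpperTail

variable {α β : Type*} [MeasurableSpace α] [CompleteLinearOrder β] [TopologicalSpace β]
  [OrderTopology β] [SecondCountableTopology β]

theorem measure_setOf_lt_eq_iSup (μ : Measure α) (h : α → β) (a : β) :
    μ {y | a < h y} = ⨆ t : Ioi a, μ {y | (t : β) ≤ h y} := by
  have hunion : {y | a < h y} = ⋃ t : Ioi a, {y | (t : β) ≤ h y} := by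
    ext y
    simp only [mem_ofPred_eq, mem_iUnion, Subtype.exists, mem_Ioi, exists_prop]
    exact ⟨fun hy => ⟨h y, hy, le_rfl⟩, fun ⟨t, hat, hty⟩ => hat.trans_le hty⟩
  rw [hunion]
  exact Antitone.measure_iUnion fun s t hst y hy => (Subtype.mono_coe _ hst).trans hy

theorem measure_setOf_measure_tail_le (μ : Measure α) (h : α → β) (c : ENNReal) :
    μ {x | μ {y | h x ≤ h y} ≤ c} ≤ c := by
  set E := {x | μ {y | h x ≤ h y} ≤ c}
  set a := ⨅ x ∈ E, h x
  by_cases hmin : ∃ x₀ ∈ E, h x₀ = a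
  · obtain ⟨x₀, hx₀E, hx₀⟩ := hmin
    refine le_trans (measure_mono fun y hy => ?_) hx₀E
    exact hx₀.trans_le (biInf_le h hy)
  · push Not at hmin
    have hE : E ⊆ {y | a < h y} := fun y hy =>
      (biInf_le h hy).lt_of_ne (hmin y hy).symm
    refine (measure_mono hE).trans ?_
    rw [measure_setOf_lt_eq_iSup]
    refine iSup_le fun t => ?_
    obtain ⟨x, hx⟩ := iInf_lt_iff.mp t.2
    obtain ⟨hxE, hxt⟩ := iInf_lt_iff.mp hx
    exact le_trans (measure_mono fun y hy => hxt.le.trans hy) hxE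

end UpperTail

theorem setIntegral_inter_eq_toReal_withDensity {α : Type*} [MeasurableSpace α] {μ : Measure α}
    [SFinite μ] {f : α → ℝ} (hf_nonneg : 0 ≤ f) (hf : AEStronglyMeasurable f μ) {S : Set α}
    (hS : MeasurableSet S) (T : Set α) :
    ∫ y in S ∩ T, f y ∂μ = (((μ.restrict S).withDensity fun y => ENNReal.ofReal (f y)) T).toReal := by
  rw [withDensity_apply', Measure.restrict_restrict' hS, inter_comm,
    integral_eq_lintegral_of_nonneg_ae (ae_of_all _ hf_nonneg) hf.restrict]

theorem stmt0_general (f : ℝ → ℝ) (hf_nonneg : ∀ x, 0 ≤ f x)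
    (hf_int : Integrable f)
    (S : Set ℝ) (hS : MeasurableSet S) (hSpos : 0 < ∫ x in S, f x)
    (P : ℝ → ℝ)
    (hP : ∀ x, P x = (∫ y in S ∩ {y | |x| ≤ |y|}, f y) / ∫ y in S, f y) :
    ∀ α ∈ Set.Icc (0:ℝ) 1,
      (∫ x in S ∩ {x | P x ≤ α}, f x) / (∫ x in S, f x) ≤ α := by
  rintro α ⟨hα, -⟩
  set μS := (volume.restrict S).withDensity fun y => ENNReal.ofReal (f y)
  have hμS : ∀ T, ∫ y in S ∩ T, f y = (μS T).toReal :=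
    setIntegral_inter_eq_toReal_withDensity hf_nonneg hf_int.aestronglyMeasurable hS
  have : IsFiniteMeasure μS := isFiniteMeasure_withDensity_ofReal hf_int.restrict.hasFiniteIntegral
  set c := α * ∫ y in S, f y
  have hc : 0 ≤ c := mul_nonneg hα hSpos.le
  have hlevel : {x | P x ≤ α} = {x | μS {y | |x| ≤ |y|} ≤ ENNReal.ofReal c} := by
    ext x
    rw [mem_ofPred_eq, mem_ofPred_eq, hP x, div_le_iff₀ hSpos, hμS,
      ENNReal.le_ofReal_iff_toReal_le (measure_ne_top _ _) hc]
  rw [div_le_iff₀ hSpos, hlevel, hμS, ← ENNReal.le_ofReal_iff_toReal_le (measure_ne_top _ _) hc]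
  simpa only [EReal.coe_le_coe_iff] using
    measure_setOf_measure_tail_le μS (fun y => ((|y| : ℝ) : EReal)) (ENNReal.ofReal c)

/-- Validity (super-uniformity) of the truncated-distribution post-selection p-value. -/
theorem stmt0 (f : ℝ → ℝ) (hf_meas : Measurable f) (hf_nonneg : ∀ x, 0 ≤ f x)
    (hf_int : Integrable f) (hf_prob : ∫ x, f x = 1)
    (S : Set ℝ) (hS : MeasurableSet S) (hSpos : 0 < ∫ x in S, f x)
    (P : ℝ → ℝ)
    (hP : ∀ x, P x = (∫ y in S ∩ {y | |x| ≤ |y|}, f y) / ∫ y in S, f y) :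
    ∀ α ∈ Set.Icc (0:ℝ) 1,
      (∫ x in S ∩ {x | P x ≤ α}, f x) / (∫ x in S, f x) ≤ α :=
  stmt0_general f hf_nonneg hf_int S hS hSpos P hP
end

section
/- Let f be a continuous probability density on ℝ, symmetric about 0, and S ⊆ ℝ measurable with ∫_S f > 0. Suppose additionally that the map c ↦ ∫_{S ∩ {|y| ≥ c}} f is continuous and strictly decreasing on the support of |φ| restricted to S. Then the conditional p-value P(φ) = ∫_{S ∩ {|y| ≥ |φ|}} f / ∫_S f, where φ has density f truncated to S, is exactly uniformly distributed on [0,1]. -/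
set_option maxHeartbeats 800000

open MeasureTheory Set Filter Topology

/-- Exact uniformity of the truncated post-selection p-value under continuity and strict
monotonicity of the conditional survival function. -/
theorem stmt1 (f : ℝ → ℝ) (hf_meas : Measurable f) (hf_cont : Continuous f)
    (hf_nonneg : ∀ x, 0 ≤ f x) (hf_symm : ∀ x, f (-x) = f x)
    (hf_int : Integrable f) (hf_prob : ∫ x, f x = 1)
    (S : Set ℝ) (hS : MeasurableSet S) (hSpos : 0 < ∫ x in S, f x)
    (hGcont : Continuous fun c : ℝ => ∫ y in S ∩ {y | c ≤ |y|}, f y)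
    (hGanti : StrictAntiOn (fun c : ℝ => ∫ y in S ∩ {y | c ≤ |y|}, f y) (abs '' S))
    (P : ℝ → ℝ)
    (hP : ∀ x, P x = (∫ y in S ∩ {y | |x| ≤ |y|}, f y) / ∫ y in S, f y) :
    ∀ α ∈ Set.Icc (0:ℝ) 1,
      (∫ x in S ∩ {x | P x ≤ α}, f x) / (∫ x in S, f x) = α := by
  intro α hα
  set T : ℝ := ∫ y in S, f y with hT
  set G : ℝ → ℝ := fun c => ∫ y in S ∩ {y | c ≤ |y|}, f y with hGdef
  have hTpos : 0 < T := hSpos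
  have hmeas : ∀ c : ℝ, MeasurableSet (S ∩ {y : ℝ | c ≤ |y|}) := fun c =>
    hS.inter ((isClosed_le continuous_const continuous_abs).measurableSet)
  have hInt : ∀ s : Set ℝ, IntegrableOn f s := fun s => hf_int.integrableOn
  have hae : ∀ s : Set ℝ, 0 ≤ᵐ[(volume : Measure ℝ).restrict s] f := fun s =>
    Filter.Eventually.of_forall hf_nonneg
  -- G is antitone
  have hGanti' : Antitone G := by
    intro a b hab
    exact setIntegral_mono_set (hInt _) (hae _)
      (Filter.Eventually.of_forall fun x hx => ⟨hx.1, le_trans hab hx.2⟩)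
  have hG0 : G 0 = T := by
    have hs : S ∩ {y : ℝ | (0:ℝ) ≤ |y|} = S := by
      ext x; simp [abs_nonneg]
    show (∫ y in S ∩ {y | (0:ℝ) ≤ |y|}, f y) = T
    rw [hs]
  have hGnonneg : ∀ c, 0 ≤ G c := fun c =>
    setIntegral_nonneg (hmeas c) fun x _ => hf_nonneg x
  -- splitting lemma
  have split : ∀ a b : ℝ, a ≤ b →
      G a = (∫ y in S ∩ {y | a ≤ |y|} ∩ {y | |y| < b}, f y) + G b := by
    intro a b hab
    have hset : S ∩ {y | a ≤ |y|} =
        (S ∩ {y | a ≤ |y|} ∩ {y | |y| < b}) ∪ (S ∩ {y | b ≤ |y|}) := by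
      ext x
      constructor
      · rintro ⟨hxS, hxa⟩
        by_cases h : b ≤ |x|
        · exact Or.inr ⟨hxS, h⟩
        · exact Or.inl ⟨⟨hxS, hxa⟩, lt_of_not_ge h⟩
      · rintro (⟨⟨hxS, hxa⟩, _⟩ | ⟨hxS, hxb⟩)
        · exact ⟨hxS, hxa⟩
        · exact ⟨hxS, le_trans hab hxb⟩
    have hdisj : Disjoint (S ∩ {y | a ≤ |y|} ∩ {y : ℝ | |y| < b}) (S ∩ {y : ℝ | b ≤ |y|}) := by
      apply Set.disjoint_left.mpr
      rintro x ⟨_, (hx1 : |x| < b)⟩ ⟨_, (hx2 : b ≤ |x|)⟩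
      exact absurd hx2 (not_le.mpr hx1)
    calc G a = ∫ y in (S ∩ {y | a ≤ |y|} ∩ {y | |y| < b}) ∪ (S ∩ {y | b ≤ |y|}), f y := by
          rw [hGdef]; rw [← hset]
      _ = _ := setIntegral_union hdisj (hmeas b) (hInt _) (hInt _)
  -- key lemma: value of G at the infimum of |·| over a level set
  have key : ∀ (E : Set ℝ) (v : ℝ), E.Nonempty → (∀ x ∈ E, G |x| = v) →
      G (sInf (abs '' E)) = v := by
    intro E v hne hlev
    have hne' : (abs '' E).Nonempty := hne.image _
    have hbdd : BddBelow (abs '' E) := ⟨0, by rintro c ⟨x, _, rfl⟩; exact abs_nonneg x⟩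
    have hcl : sInf (abs '' E) ∈ closure (abs '' E) := csInf_mem_closure hne' hbdd
    have hsub : abs '' E ⊆ {c | G c = v} := by
      rintro c ⟨x, hx, rfl⟩; exact hlev x hx
    have hclosed : IsClosed {c : ℝ | G c = v} :=
      isClosed_eq hGcont continuous_const
    exact (closure_minimal hsub hclosed) hcl
  -- rewrite the target set
  have hsetP : S ∩ {x | P x ≤ α} = S ∩ {x | G |x| ≤ α * T} := by
    ext x
    simp only [mem_inter_iff, mem_setOf_eq, hP x, and_congr_right_iff]
    intro _
    rw [div_le_iff₀ hTpos]
  rw [hsetP]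
  have hAmeas : MeasurableSet (S ∩ {x : ℝ | G |x| ≤ α * T}) := by
    refine hS.inter ?_
    exact (isClosed_le (hGcont.comp continuous_abs) continuous_const).measurableSet
  rcases eq_or_lt_of_le hα.1 with hα0 | hα0
  · -- α = 0
    subst hα0
    simp only [zero_mul] at hAmeas ⊢
    have hAzero : ∫ x in S ∩ {x : ℝ | G |x| ≤ 0}, f x = 0 := by
      rcases Set.eq_empty_or_nonempty (S ∩ {x : ℝ | G |x| ≤ 0}) with h | h
      · rw [h]; simp
      · set E := S ∩ {x : ℝ | G |x| ≤ 0} with hE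
        have hlev : ∀ x ∈ E, G |x| = (0:ℝ) := by
          rintro x ⟨hxS, (hxle : G |x| ≤ 0)⟩
          exact le_antisymm hxle (hGnonneg _)
        have hGc0 : G (sInf (abs '' E)) = 0 := key E 0 h hlev
        have hbddE : BddBelow (abs '' E) := by
          refine ⟨0, fun c hc => ?_⟩
          obtain ⟨z, _, rfl⟩ := hc
          exact abs_nonneg z
        have hEsub : E ⊆ S ∩ {y | sInf (abs '' E) ≤ |y|} := by
          rintro x hx
          exact ⟨hx.1, csInf_le hbddE ⟨x, hx, rfl⟩⟩
        have h1 : ∫ x in E, f x ≤ G (sInf (abs '' E)) :=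
          setIntegral_mono_set (hInt _) (hae _) (Filter.Eventually.of_forall hEsub)
        have h2 : 0 ≤ ∫ x in E, f x := setIntegral_nonneg hAmeas fun x _ => hf_nonneg x
        linarith [hGc0 ▸ h1]
    rw [hAzero, zero_div]
  · -- α > 0 : find c₁ with G c₁ ≤ α * T
    have htail : Filter.Tendsto (fun n : ℕ => G n) Filter.atTop (𝓝 0) := by
      have h0 : (∫ x in ⋂ n : ℕ, S ∩ {y : ℝ | (n:ℝ) ≤ |y|}, f x) = 0 := by
        have : (⋂ n : ℕ, S ∩ {y : ℝ | (n:ℝ) ≤ |y|}) = ∅ := by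
          ext x
          simp only [mem_iInter, mem_inter_iff, mem_setOf_eq, mem_empty_iff_false,
            iff_false, not_forall]
          obtain ⟨n, hn⟩ := exists_nat_gt |x|
          exact ⟨n, fun h => absurd h.2 (not_le.mpr hn)⟩
        rw [this]; simp
      have := tendsto_setIntegral_of_antitone (μ := volume) (f := f)
        (s := fun n : ℕ => S ∩ {y : ℝ | (n:ℝ) ≤ |y|}) (fun n => hmeas _)
        (fun a b hab => Set.inter_subset_inter_right _
          (fun x (hx : (b:ℝ) ≤ |x|) => le_trans (by exact_mod_cast hab) hx))
        ⟨0, hInt _⟩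
      rwa [h0] at this
    obtain ⟨n, hn⟩ : ∃ n : ℕ, G n ≤ α * T := by
      have hpos : 0 < α * T := mul_pos hα0 hTpos
      rcases (htail.eventually (eventually_lt_nhds hpos)).exists with ⟨n, hn⟩
      exact ⟨n, le_of_lt hn⟩
    set c₁ : ℝ := max (n : ℝ) 0 with hc₁
    have hc₁nn : (0:ℝ) ≤ c₁ := le_max_right _ _
    have hGc₁ : G c₁ ≤ α * T := le_trans (hGanti' (le_max_left _ _)) hn
    -- IVT
    obtain ⟨c, hc, hGc⟩ : ∃ c ∈ Icc (0:ℝ) c₁, G c = α * T := by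
      have := intermediate_value_Icc' hc₁nn hGcont.continuousOn
      have hmem : α * T ∈ Icc (G c₁) (G 0) := by
        constructor
        · exact hGc₁
        · rw [hG0]
          nlinarith [hα.2, hTpos]
      obtain ⟨c, hc, hGc⟩ := this hmem
      exact ⟨c, hc, hGc⟩
    -- decompose A
    set A := S ∩ {x : ℝ | G |x| ≤ α * T} with hA
    set B := A ∩ {x : ℝ | |x| < c} with hB
    have hBmeas : MeasurableSet B :=
      hAmeas.inter (isOpen_lt continuous_abs continuous_const).measurableSet
    have hAunion : A = B ∪ (S ∩ {y | c ≤ |y|}) := by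
      ext x
      constructor
      · intro hx
        by_cases h : c ≤ |x|
        · exact Or.inr ⟨hx.1, h⟩
        · exact Or.inl ⟨hx, lt_of_not_ge h⟩
      · rintro (⟨hx, _⟩ | ⟨hxS, hxc⟩)
        · exact hx
        · exact ⟨hxS, le_trans (hGanti' hxc) (le_of_eq hGc)⟩
    have hdisj : Disjoint B (S ∩ {y : ℝ | c ≤ |y|}) := by
      apply Set.disjoint_left.mpr
      rintro x ⟨_, (hx1 : |x| < c)⟩ ⟨_, (hx2 : c ≤ |x|)⟩
      exact absurd hx2 (not_le.mpr hx1)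
    have hBzero : ∫ x in B, f x = 0 := by
      rcases Set.eq_empty_or_nonempty B with h | h
      · rw [h]; simp
      · have hlev : ∀ x ∈ B, G |x| = α * T := by
          rintro x ⟨⟨hxS, hxle⟩, hxlt⟩
          exact le_antisymm hxle (hGc ▸ hGanti' (le_of_lt hxlt))
        have hGc0 : G (sInf (abs '' B)) = α * T := key B (α * T) h hlev
        set c0 := sInf (abs '' B) with hc0
        have hbdd : BddBelow (abs '' B) := ⟨0, by rintro z ⟨x, _, rfl⟩; exact abs_nonneg x⟩
        obtain ⟨x0, hx0⟩ := h
        have hc0le : c0 ≤ c := le_trans (csInf_le hbdd ⟨x0, hx0, rfl⟩) (le_of_lt hx0.2)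
        have hsplit := split c0 c hc0le
        rw [hGc0, hGc] at hsplit
        have hmid : ∫ y in S ∩ {y | c0 ≤ |y|} ∩ {y | |y| < c}, f y = 0 := by linarith
        have hBsub : B ⊆ S ∩ {y | c0 ≤ |y|} ∩ {y | |y| < c} := by
          rintro x ⟨⟨hxS, _⟩, hxlt⟩
          exact ⟨⟨hxS, csInf_le hbdd ⟨x, ⟨⟨hxS, ‹G |x| ≤ α * T›⟩, hxlt⟩, rfl⟩⟩, hxlt⟩
        have h1 : ∫ x in B, f x ≤ ∫ y in S ∩ {y | c0 ≤ |y|} ∩ {y | |y| < c}, f y :=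
          setIntegral_mono_set (hInt _) (hae _) (Filter.Eventually.of_forall hBsub)
        have h2 : 0 ≤ ∫ x in B, f x := setIntegral_nonneg hBmeas fun x _ => hf_nonneg x
        linarith
    have hAint : ∫ x in A, f x = α * T := by
      rw [hAunion, setIntegral_union hdisj (hmeas c) (hInt _) (hInt _), hBzero, zero_add]
      exact hGc
    rw [hAint]
    field_simp
end

section
/- Let f, g be probability densities, S ⊆ ℝ × ℝ^d measurable with positive probability under the product density f(φ)∏g(ψ_i). Define the ideal p-value P_I(φ) = Pr(|Φ| ≥ |φ| | (Φ,Ψ) ∈ S) where (Φ,Ψ) has the product density restricted to S. Fix α ∈ [0,1] and let c_α satisfy Pr(|Φ| ≥ c_α, (Φ,Ψ) ∈ S) = α · Pr((Φ,Ψ) ∈ S). Let k̃ : [0,∞) → [0,∞) be nondecreasing. Then among all measurable sets R ⊆ S with Pr((Φ,Ψ) ∈ R) ≤ α · Pr((Φ,Ψ) ∈ S), the set R_α = S ∩ {(φ,ψ) : |φ| ≥ c_α} maximizes ∫_R k̃(|φ|) f(φ) ∏ g(ψ_i) dφ dψ. -/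
open MeasureTheory Set

/-- Neyman–Pearson style optimality of tail rejection regions in `|φ|` against alternatives
with nondecreasing likelihood ratio `k̃(|φ|)`, under the selection-conditioned null. -/
theorem stmt2 (d : ℕ) (f g : ℝ → ℝ)
    (hf_nonneg : ∀ x, 0 ≤ f x) (hf_meas : Measurable f) (hf_prob : ∫ x, f x = 1)
    (hg_nonneg : ∀ x, 0 ≤ g x) (hg_meas : Measurable g) (hg_prob : ∫ x, g x = 1)
    (dens : ℝ × (Fin d → ℝ) → ℝ)
    (hdens : ∀ p, dens p = f p.1 * ∏ i, g (p.2 i))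
    (S : Set (ℝ × (Fin d → ℝ))) (hS : MeasurableSet S)
    (hSpos : 0 < ∫ p in S, dens p)
    (ktil : ℝ → ℝ) (hk_nonneg : ∀ x, 0 ≤ x → 0 ≤ ktil x)
    (hk_mono : MonotoneOn ktil (Set.Ici 0))
    (hint : IntegrableOn (fun p => ktil |p.1| * dens p) S)
    (α : ℝ) (hα : α ∈ Set.Icc (0:ℝ) 1)
    (c : ℝ)
    (hc : ∫ p in S ∩ {p | c ≤ |p.1|}, dens p = α * ∫ p in S, dens p) :
    ∀ R : Set (ℝ × (Fin d → ℝ)), R ⊆ S → MeasurableSet R →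
      (∫ p in R, dens p) ≤ α * ∫ p in S, dens p →
      (∫ p in R, ktil |p.1| * dens p) ≤ ∫ p in S ∩ {p | c ≤ |p.1|}, ktil |p.1| * dens p := by
  intro R hRS hRmeas hRle
  -- basic integrability of densities
  have hf_int : Integrable f := by
    by_contra h
    rw [integral_undef h] at hf_prob; norm_num at hf_prob
  have hg_int : Integrable g := by
    by_contra h
    rw [integral_undef h] at hg_prob; norm_num at hg_prob
  have hG_int : Integrable (fun ψ : Fin d → ℝ => ∏ i, g (ψ i)) := by
    exact Integrable.fintype_prod (fun _ => hg_int)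
  have hdens_eq : dens = fun p => f p.1 * ∏ i, g (p.2 i) := funext hdens
  have hdens_int : Integrable dens := by
    rw [hdens_eq, MeasureTheory.Measure.volume_eq_prod]
    exact Integrable.mul_prod hf_int hG_int
  have hdens_nonneg : ∀ p, 0 ≤ dens p := by
    intro p; rw [hdens]
    exact mul_nonneg (hf_nonneg _) (Finset.prod_nonneg fun i _ => hg_nonneg _)
  -- sets
  set A : Set (ℝ × (Fin d → ℝ)) := S ∩ {p | c ≤ |p.1|} with hA
  have hCmeas : MeasurableSet {p : ℝ × (Fin d → ℝ) | c ≤ |p.1|} :=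
    measurableSet_le measurable_const ((measurable_fst).abs)
  have hAmeas : MeasurableSet A := hS.inter hCmeas
  set h : ℝ × (Fin d → ℝ) → ℝ := fun p => ktil |p.1| * dens p with hh
  set k0 : ℝ := ktil (max c 0) with hk0
  have hk0_nonneg : 0 ≤ k0 := hk_nonneg _ (le_max_right _ _)
  -- integrability on subsets
  have hintA : IntegrableOn h A := hint.mono_set inter_subset_left
  have hintR : IntegrableOn h R := hint.mono_set hRS
  have hintAR : IntegrableOn h (A ∩ R) := hintA.mono_set inter_subset_left
  have hintAdR : IntegrableOn h (A \ R) := hintA.mono_set diff_subset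
  have hintRdA : IntegrableOn h (R \ A) := hintR.mono_set diff_subset
  have hdintA : IntegrableOn dens A := hdens_int.integrableOn
  have hdintR : IntegrableOn dens R := hdens_int.integrableOn
  have hkd_int : ∀ T : Set (ℝ × (Fin d → ℝ)), IntegrableOn (fun p => k0 * dens p) T :=
    fun T => (hdens_int.const_mul k0).integrableOn
  -- splitting lemma
  have split : ∀ (u : ℝ × (Fin d → ℝ) → ℝ) (B C : Set (ℝ × (Fin d → ℝ))),
      MeasurableSet B → MeasurableSet C → IntegrableOn u B →
      ∫ p in B, u p = (∫ p in B ∩ C, u p) + ∫ p in B \ C, u p := by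
    intro u B C hB hC hu
    rw [← setIntegral_union (disjoint_sdiff_self_right.mono_left inter_subset_right)
        (hB.diff hC) (hu.mono_set inter_subset_left) (hu.mono_set diff_subset),
      Set.inter_union_diff]
  have splitA : ∫ p in A, h p = (∫ p in A ∩ R, h p) + ∫ p in A \ R, h p :=
    split h A R hAmeas hRmeas hintA
  have splitR : ∫ p in R, h p = (∫ p in R ∩ A, h p) + ∫ p in R \ A, h p :=
    split h R A hRmeas hAmeas hintR
  have splitdA : ∫ p in A, dens p = (∫ p in A ∩ R, dens p) + ∫ p in A \ R, dens p :=
    split dens A R hAmeas hRmeas hdintA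
  have splitdR : ∫ p in R, dens p = (∫ p in R ∩ A, dens p) + ∫ p in R \ A, dens p :=
    split dens R A hRmeas hAmeas hdintR
  -- pointwise bounds
  have hAdR : ∫ p in A \ R, k0 * dens p ≤ ∫ p in A \ R, h p := by
    apply setIntegral_mono_on (hkd_int _) hintAdR (hAmeas.diff hRmeas)
    intro p hp
    have hc' : c ≤ |p.1| := hp.1.2
    have : max c 0 ≤ |p.1| := max_le hc' (abs_nonneg _)
    exact mul_le_mul_of_nonneg_right
      (hk_mono (Set.mem_Ici.mpr (le_max_right c 0)) (Set.mem_Ici.mpr (abs_nonneg _)) this) (hdens_nonneg p)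
  have hRdA : ∫ p in R \ A, h p ≤ ∫ p in R \ A, k0 * dens p := by
    apply setIntegral_mono_on hintRdA (hkd_int _) (hRmeas.diff hAmeas)
    intro p hp
    have hpc : ¬ c ≤ |p.1| := fun hcc => hp.2 ⟨hRS hp.1, hcc⟩
    have : |p.1| ≤ max c 0 := le_max_of_le_left (le_of_not_ge hpc)
    exact mul_le_mul_of_nonneg_right
      (hk_mono (Set.mem_Ici.mpr (abs_nonneg _)) (Set.mem_Ici.mpr (le_max_right c 0)) this) (hdens_nonneg p)
  have hconstAdR : ∫ p in A \ R, k0 * dens p = k0 * ∫ p in A \ R, dens p :=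
    integral_const_mul _ _
  have hconstRdA : ∫ p in R \ A, k0 * dens p = k0 * ∫ p in R \ A, dens p :=
    integral_const_mul _ _
  have hmeasineq : ∫ p in R, dens p ≤ ∫ p in A, dens p := by
    rw [hA, hc]; exact hRle
  have hIAR : ∫ p in A ∩ R, h p = ∫ p in R ∩ A, h p := by rw [Set.inter_comm]
  have hdIAR : ∫ p in A ∩ R, dens p = ∫ p in R ∩ A, dens p := by rw [Set.inter_comm]
  have key : k0 * (∫ p in R \ A, dens p) ≤ k0 * ∫ p in A \ R, dens p := by
    apply mul_le_mul_of_nonneg_left _ hk0_nonneg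
    linarith [splitdA, splitdR, hmeasineq, hdIAR]
  linarith [splitA, splitR, hAdR, hRdA, hconstAdR, hconstRdA, hIAR, key]
end

section
/- Let (Ω, P) be a probability space, k̃ : [0,∞) → [0,∞) nondecreasing, and suppose under the null the statistic has super-uniform p-values. Formally: let P_I and P* be [0,1]-valued random variables such that (i) under the null measure Q, Pr_Q(P* ≤ α) ≤ α for all α, (ii) the alternative measure has density k̃(|φ|) with respect to Q where φ is the test statistic, and (iii) {P_I ≤ α} = {|φ| ≥ c_α} with Pr_Q(|φ| ≥ c_α) = α. Then under the alternative, Pr(P_I ≤ α) ≥ Pr(P* ≤ α) for all α ∈ [0,1]. -/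
open MeasureTheory Set

/-! A Neyman–Pearson argument. The density `k̃(|φ|)` of the alternative is at least
`K = k̃(max c 0)` on the tail set `B = {c ≤ |φ|}` and at most `K` off it (the `max` because `c`
may be negative while `k̃` is only monotone on `[0, ∞)`). Any `A` with `Q A ≤ Q B` has
`Q (A \ B) ≤ Q (B \ A)`, so its alternative mass off `B` is at most `K Q (A \ B)`, which is at most
the alternative mass of `B \ A`. -/

namespace MeasureTheory

variable {Ω : Type*} [MeasurableSpace Ω] {Q : Measure Ω} {f : Ω → ENNReal} {A B : Set Ω}

lemma measure_diff_le_measure_diff (hB : MeasurableSet B) (hA : MeasurableSet A)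
    (hQ : Q A ≤ Q B) (hA_fin : Q A ≠ ⊤) : Q (A \ B) ≤ Q (B \ A) := by
  have hinter : Q (A ∩ B) ≠ ⊤ := measure_ne_top_of_subset inter_subset_left hA_fin
  refine (ENNReal.add_le_add_iff_left hinter).mp ?_
  calc Q (A ∩ B) + Q (A \ B) = Q A := measure_inter_add_sdiff A hB
    _ ≤ Q B := hQ
    _ = Q (A ∩ B) + Q (B \ A) := by rw [inter_comm, measure_inter_add_sdiff B hA]

lemma withDensity_apply_le_of_density_threshold (hA : MeasurableSet A) (hB : MeasurableSet B)
    (hQ : Q A ≤ Q B) (hA_fin : Q A ≠ ⊤) (K : ENNReal)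
    (hf_low : ∀ ω ∈ A \ B, f ω ≤ K) (hf_high : ∀ ω ∈ B \ A, K ≤ f ω) :
    Q.withDensity f A ≤ Q.withDensity f B := by
  set μ := Q.withDensity f
  have hAB : MeasurableSet (A \ B) := hA.diff hB
  have hBA : MeasurableSet (B \ A) := hB.diff hA
  have hdiff : μ (A \ B) ≤ μ (B \ A) :=
    calc μ (A \ B) ≤ ∫⁻ _ in A \ B, K ∂Q := by
          rw [withDensity_apply _ hAB]; exact setLIntegral_mono' hAB hf_low
      _ = K * Q (A \ B) := setLIntegral_const _ _
      _ ≤ K * Q (B \ A) := mul_le_mul_right (measure_diff_le_measure_diff hB hA hQ hA_fin) K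
      _ = ∫⁻ _ in B \ A, K ∂Q := (setLIntegral_const _ _).symm
      _ ≤ μ (B \ A) := by
          rw [withDensity_apply _ hBA]; exact setLIntegral_mono' hBA hf_high
  calc μ A = μ (A ∩ B) + μ (A \ B) := (measure_inter_add_sdiff A hB).symm
    _ ≤ μ (A ∩ B) + μ (B \ A) := by gcongr
    _ = μ B := by rw [inter_comm, measure_inter_add_sdiff B hA]

end MeasureTheory

theorem stmt3_general {Ω : Type*} [MeasurableSpace Ω] (Q : Measure Ω)
    (φ : Ω → ℝ) (hφ : Measurable φ)
    (ktil : ℝ → ℝ)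
    (hk_mono : MonotoneOn ktil (Set.Ici 0))
    (μ : Measure Ω)
    (hμ : μ = Q.withDensity fun ω => ENNReal.ofReal (ktil |φ ω|))
    (PI Pstar : Ω → ℝ) (hPstar_meas : Measurable Pstar)
    (hPstar : ∀ α ∈ Set.Icc (0:ℝ) 1, Q {ω | Pstar ω ≤ α} ≤ ENNReal.ofReal α)
    (c : ℝ → ℝ)
    (hPI : ∀ α ∈ Set.Icc (0:ℝ) 1,
      {ω | PI ω ≤ α} = {ω | c α ≤ |φ ω|} ∧ Q {ω | c α ≤ |φ ω|} = ENNReal.ofReal α) :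
    ∀ α ∈ Set.Icc (0:ℝ) 1, μ {ω | Pstar ω ≤ α} ≤ μ {ω | PI ω ≤ α} := by
  intro α hα
  obtain ⟨hrejection, hlevel⟩ := hPI α hα
  have hQ : Q {ω | Pstar ω ≤ α} ≤ Q {ω | c α ≤ |φ ω|} := hlevel ▸ hPstar α hα
  rw [hrejection, hμ]
  refine withDensity_apply_le_of_density_threshold (measurableSet_le hPstar_meas measurable_const)
    (measurableSet_le measurable_const hφ.abs) hQ
    (ne_top_of_le_ne_top (hlevel ▸ ENNReal.ofReal_ne_top) hQ)
    (ENNReal.ofReal (ktil (max (c α) 0))) ?_ ?_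
  · rintro ω ⟨-, hbelow : ¬c α ≤ |φ ω|⟩
    exact ENNReal.ofReal_le_ofReal <| hk_mono (mem_Ici.mpr (abs_nonneg _))
      (mem_Ici.mpr (le_max_right _ _)) (le_max_of_le_left (not_le.mp hbelow).le)
  · rintro ω ⟨habove : c α ≤ |φ ω|, -⟩
    exact ENNReal.ofReal_le_ofReal <|
      hk_mono (mem_Ici.mpr (le_max_right _ _)) (mem_Ici.mpr (abs_nonneg _))
        (max_le habove (abs_nonneg _))

/-- Theorem 1 of the paper: the ideal post-selection p-value, whose rejection regions are
tail sets in `|φ|` of exact null level, dominates any valid p-value in power against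
alternatives with monotone likelihood ratio `k̃(|φ|)` with respect to the null. -/
theorem stmt3 {Ω : Type*} [MeasurableSpace Ω] (Q : Measure Ω) [IsProbabilityMeasure Q]
    (φ : Ω → ℝ) (hφ : Measurable φ)
    (ktil : ℝ → ℝ) (hk_nonneg : ∀ x, 0 ≤ x → 0 ≤ ktil x)
    (hk_mono : MonotoneOn ktil (Set.Ici 0))
    (μ : Measure Ω)
    (hμ : μ = Q.withDensity fun ω => ENNReal.ofReal (ktil |φ ω|))
    [IsProbabilityMeasure μ]
    (PI Pstar : Ω → ℝ) (hPstar_meas : Measurable Pstar)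
    (hPstar : ∀ α ∈ Set.Icc (0:ℝ) 1, Q {ω | Pstar ω ≤ α} ≤ ENNReal.ofReal α)
    (c : ℝ → ℝ)
    (hPI : ∀ α ∈ Set.Icc (0:ℝ) 1,
      {ω | PI ω ≤ α} = {ω | c α ≤ |φ ω|} ∧ Q {ω | c α ≤ |φ ω|} = ENNReal.ofReal α) :
    ∀ α ∈ Set.Icc (0:ℝ) 1, μ {ω | Pstar ω ≤ α} ≤ μ {ω | PI ω ≤ α} :=
  stmt3_general Q φ hφ ktil hk_mono μ hμ PI Pstar hPstar_meas hPstar c hPI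
end

section
/- Let f be the N(0,σ²) density and h a probability density on ℝ symmetric about 0 (h(y) = h(-y)). Define f_{H1}(φ) = ∫ f(φ - y) h(y) dy. Then the ratio k(φ) = f_{H1}(φ)/f(φ) is an even function of φ that is nondecreasing in |φ|. -/
/-!
Since `f (φ - y) / f φ = exp (φ y / σ²) · exp (-y² / 2σ²)`, the ratio `k` is the two-sided
Laplace transform, at `φ / σ²`, of the even nonnegative weight `w y = exp (-y² / 2σ²) h y`.
For an even weight the Laplace transform equals `∫ cosh (t y) w y`, and `cosh` is even and
increasing in `|t y|`.
-/

open MeasureTheory Real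

section EvenWeight

variable {w : ℝ → ℝ}

theorem integral_exp_neg_mul_of_even (hw : ∀ y, w (-y) = w y) (t : ℝ) :
    ∫ y, exp (-t * y) * w y = ∫ y, exp (t * y) * w y := by
  rw [← integral_neg_eq_self (fun y => exp (t * y) * w y)]
  simp only [hw, mul_neg, neg_mul]

theorem cosh_mul_mul_eq_average (t y : ℝ) :
    cosh (t * y) * w y = (exp (t * y) * w y + exp (-t * y) * w y) / 2 := by
  rw [cosh_eq, neg_mul]
  ring

theorem integral_exp_mul_eq_integral_cosh_mul (hw : ∀ y, w (-y) = w y) {t : ℝ}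
    (hpos : Integrable fun y => exp (t * y) * w y)
    (hneg : Integrable fun y => exp (-t * y) * w y) :
    ∫ y, exp (t * y) * w y = ∫ y, cosh (t * y) * w y := by
  simp_rw [cosh_mul_mul_eq_average t]
  rw [integral_div, integral_add hpos hneg, integral_exp_neg_mul_of_even hw]
  ring

theorem integral_exp_mul_le_of_abs_le (hw : ∀ y, w (-y) = w y) (hw_nonneg : ∀ y, 0 ≤ w y)
    (hint : ∀ t, Integrable fun y => exp (t * y) * w y) {s t : ℝ} (hst : |s| ≤ |t|) :
    ∫ y, exp (s * y) * w y ≤ ∫ y, exp (t * y) * w y := by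
  have hint_cosh (t : ℝ) : Integrable fun y => cosh (t * y) * w y := by
    simp_rw [cosh_mul_mul_eq_average t]
    exact ((hint t).add (hint (-t))).div_const 2
  rw [integral_exp_mul_eq_integral_cosh_mul hw (hint s) (hint (-s)),
    integral_exp_mul_eq_integral_cosh_mul hw (hint t) (hint (-t))]
  refine integral_mono (hint_cosh s) (hint_cosh t) fun y => ?_
  have hcosh : cosh (s * y) ≤ cosh (t * y) := by
    rw [cosh_le_cosh, abs_mul, abs_mul]
    exact mul_le_mul_of_nonneg_right hst (abs_nonneg y)
  exact mul_le_mul_of_nonneg_right hcosh (hw_nonneg y)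

end EvenWeight

theorem exp_neg_sq_sub_div_eq (σ φ y : ℝ) :
    exp (-(φ - y) ^ 2 / (2 * σ ^ 2)) =
      exp (-φ ^ 2 / (2 * σ ^ 2)) * (exp (φ / σ ^ 2 * y) * exp (-y ^ 2 / (2 * σ ^ 2))) := by
  rw [← exp_add, ← exp_add]
  congr 1
  ring

theorem stmt5_general (σ : ℝ) (hσ : 0 < σ) (f h : ℝ → ℝ)
    (hf : ∀ x, f x = Real.exp (-x^2 / (2*σ^2)) / Real.sqrt (2 * Real.pi * σ^2))
    (hh_nonneg : ∀ y, 0 ≤ h y) (hh_symm : ∀ y, h (-y) = h y)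
    (hint : ∀ φ : ℝ, Integrable fun y => f (φ - y) * h y)
    (k : ℝ → ℝ) (hk : ∀ φ, k φ = (∫ y, f (φ - y) * h y) / f φ) :
    (∀ φ, k (-φ) = k φ) ∧ (∀ a b : ℝ, |a| ≤ |b| → k a ≤ k b) := by
  set w : ℝ → ℝ := fun y => exp (-y ^ 2 / (2 * σ ^ 2)) * h y
  have hf_ne (φ : ℝ) : f φ ≠ 0 := by rw [hf]; positivity
  have hfactor (φ y : ℝ) : f (φ - y) * h y = f φ * (exp (φ / σ ^ 2 * y) * w y) := by
    rw [hf, hf, exp_neg_sq_sub_div_eq]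
    ring
  have hk_laplace (φ : ℝ) : k φ = ∫ y, exp (φ / σ ^ 2 * y) * w y := by
    rw [hk, funext (hfactor φ), integral_const_mul, mul_div_cancel_left₀ _ (hf_ne φ)]
  have hw_even (y : ℝ) : w (-y) = w y := by simp only [w, neg_sq, hh_symm]
  have hw_nonneg (y : ℝ) : 0 ≤ w y := mul_nonneg (exp_pos _).le (hh_nonneg y)
  have hw_int (t : ℝ) : Integrable fun y => exp (t * y) * w y := by
    have := hint (t * σ ^ 2)
    simp_rw [hfactor, mul_div_cancel_right₀ t (pow_ne_zero 2 hσ.ne')] at this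
    exact (integrable_const_mul_iff (hf_ne _).isUnit _).mp this
  refine ⟨fun φ => ?_, fun a b hab => ?_⟩
  · rw [hk_laplace, hk_laplace, neg_div, integral_exp_neg_mul_of_even hw_even]
  · rw [hk_laplace, hk_laplace]
    refine integral_exp_mul_le_of_abs_le hw_even hw_nonneg hw_int ?_
    rw [abs_div, abs_div]
    gcongr

/-- A Gaussian location mixture with symmetric mixing density has a likelihood ratio with
respect to the null Gaussian density that is even in `φ` and nondecreasing in `|φ|`. -/
theorem stmt5 (σ : ℝ) (hσ : 0 < σ) (f h : ℝ → ℝ)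
    (hf : ∀ x, f x = Real.exp (-x^2 / (2*σ^2)) / Real.sqrt (2 * Real.pi * σ^2))
    (hh_nonneg : ∀ y, 0 ≤ h y) (hh_symm : ∀ y, h (-y) = h y)
    (hh_meas : Measurable h) (hh_int : Integrable h) (hh_prob : ∫ y, h y = 1)
    (hint : ∀ φ : ℝ, Integrable fun y => f (φ - y) * h y)
    (k : ℝ → ℝ) (hk : ∀ φ, k φ = (∫ y, f (φ - y) * h y) / f φ) :
    (∀ φ, k (-φ) = k φ) ∧ (∀ a b : ℝ, |a| ≤ |b| → k a ≤ k b) :=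
  stmt5_general σ hσ f h hf hh_nonneg hh_symm hint k hk
end

section
/- Let f and g be probability densities on ℝ and ℝ^d respectively, and for each ψ ∈ ℝ^d let S_ψ ⊆ ℝ be measurable. Let Ψ^{(2)}, ..., Ψ^{(N)} be i.i.d. with density g, and let (Φ, Ψ^{(1)}) be drawn, independently of the others, from the density proportional to f(φ) g(ψ) 1{φ ∈ S_ψ} (assumed normalizable). Define W = Σ_{j=1}^N w_j with w_j = ∫_{S_{Ψ^{(j)}}} f, and p̂_N = (Σ_{j=1}^N ∫_{S_{Ψ^{(j)}} ∩ {|y| ≥ |Φ|}} f) / W. Assume for g-almost-every collection (ψ^{(1)},...,ψ^{(N)}) that the conditional distribution of |Φ| given Ψ^{(1:N)} is continuous. Then p̂_N is uniformly distributed on [0,1]. -/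
/-!
Conditionally on the nuisance samples `ψ₁, …, ψ_N`, average over which of them is the observed
one. Since the sampling density `∏ g(ψⱼ)` and `p̂_N` are symmetric in the `ψⱼ`, exchanging the
observed index with any other leaves the integral over `{p̂_N ≤ α}` unchanged, so `N` times it
equals the integral of the pooled weight `h_ψ = ∑ₖ f · 1_{S_{ψₖ}}`. But `p̂_N(φ)` is exactly the
normalised upper tail `T(|φ|) / T(0)` of `|φ|` under `h_ψ`, and `T` is continuous; by the
probability integral transform the `h_ψ`-mass of `{p̂_N ≤ α}` is `α · T(0)` for every `ψ`.
Integrating over `ψ` gives `α` times the normalising constant.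
-/

open MeasureTheory Set Filter Topology

section TailPValue

variable {α : Type*} [MeasurableSpace α] (μ : Measure α) (h R : α → ℝ)

noncomputable def tailIntegral (t : ℝ) : ℝ := ∫ x in {x | t ≤ R x}, h x ∂μ

noncomputable def tailPValue (x : α) : ℝ := tailIntegral μ h R (R x) / tailIntegral μ h R 0

variable {μ h R}

lemma tailIntegral_zero (hR : ∀ x, 0 ≤ R x) : tailIntegral μ h R 0 = ∫ x, h x ∂μ := by
  simp [tailIntegral, hR]

lemma antitone_tailIntegral (hh : ∀ x, 0 ≤ h x) (hint : Integrable h μ) :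
    Antitone (tailIntegral μ h R) := fun _ _ hst =>
  setIntegral_mono_set hint.integrableOn (.of_forall hh) (.of_forall fun _ hx => hst.trans hx)

lemma tendsto_tailIntegral_atTop (hint : Integrable h μ) (hR : Measurable R) :
    Tendsto (tailIntegral μ h R) atTop (𝓝 0) := by
  have hempty : ⋂ t : ℝ, {x | t ≤ R x} = ∅ :=
    eq_empty_of_forall_notMem fun x hx => absurd (mem_iInter.mp hx (R x + 1)) (by simp)
  have := tendsto_setIntegral_of_antitone (μ := μ) (f := h) (s := fun t => {x | t ≤ R x})
    (fun t => measurableSet_le measurable_const hR) (fun _ _ hst _ hx => hst.trans hx)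
    ⟨0, hint.integrableOn⟩
  rwa [hempty, Measure.restrict_empty, integral_zero_measure] at this

lemma tailPValue_le_one (hh : ∀ x, 0 ≤ h x) (hint : Integrable h μ) (hR : ∀ x, 0 ≤ R x)
    (x : α) : tailPValue μ h R x ≤ 1 :=
  div_le_one_of_le₀ (antitone_tailIntegral hh hint (hR x))
    (setIntegral_nonneg_of_ae (.of_forall hh))

/-- The sublevel set `{T ∘ R ≤ c}` is the upper set `{m ≤ R}` with `m` the least `t ≥ 0` such
that `T t ≤ c`; continuity of `T` forces `T m = c`. -/
lemma setIntegral_tailIntegral_le (hh : ∀ x, 0 ≤ h x) (hint : Integrable h μ)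
    (hR_meas : Measurable R) (hR : ∀ x, 0 ≤ R x) (hcont : Continuous (tailIntegral μ h R))
    {c : ℝ} (hc0 : 0 ≤ c) (hc : c ≤ tailIntegral μ h R 0) :
    ∫ x in {x | tailIntegral μ h R (R x) ≤ c}, h x ∂μ = c := by
  set T := tailIntegral μ h R
  set A := {t | 0 ≤ t ∧ T t ≤ c}
  by_cases hA : A.Nonempty
  · have hbdd : BddBelow A := ⟨0, fun t ht => ht.1⟩
    set m := sInf A
    have hm : m ∈ A := (isClosed_Ici.inter (isClosed_Iic.preimage hcont)).csInf_mem hA hbdd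
    have hTm : T m = c := by
      refine le_antisymm hm.2 ?_
      rcases hm.1.eq_or_lt with hm0 | hm0
      · rwa [← hm0]
      · refine ge_of_tendsto (hcont.continuousAt.continuousWithinAt (s := Iio m)) ?_
        filter_upwards [Ioo_mem_nhdsLT hm0] with t ht
        exact le_of_lt (not_le.mp fun htc => (csInf_le hbdd ⟨ht.1.le, htc⟩).not_gt ht.2)
    have hset : {x | T (R x) ≤ c} = {x | m ≤ R x} := by
      ext x
      exact ⟨fun hx => csInf_le hbdd ⟨hR x, hx⟩,
        fun hx => (antitone_tailIntegral hh hint hx).trans hm.2⟩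
    rw [hset]
    exact hTm
  · have hempty : {x | T (R x) ≤ c} = ∅ :=
      eq_empty_of_forall_notMem fun x hx => hA ⟨R x, hR x, hx⟩
    have hc_eq : c = 0 := by
      by_contra hne
      obtain ⟨t, ht0, htc⟩ := ((eventually_ge_atTop 0).and <|
        (tendsto_tailIntegral_atTop hint hR_meas).eventually
          (eventually_le_nhds (hc0.lt_of_ne' hne))).exists
      exact hA ⟨t, ht0, htc⟩
    rw [hempty, hc_eq, Measure.restrict_empty, integral_zero_measure]

lemma setIntegral_tailPValue_le (hh : ∀ x, 0 ≤ h x) (hint : Integrable h μ)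
    (hR_meas : Measurable R) (hR : ∀ x, 0 ≤ R x) (hcont : Continuous (tailIntegral μ h R))
    {β : ℝ} (hβ : β ∈ Icc 0 1) :
    ∫ x in {x | tailPValue μ h R x ≤ β}, h x ∂μ = β * ∫ x, h x ∂μ := by
  rw [← tailIntegral_zero (μ := μ) hR]
  have h0 : 0 ≤ tailIntegral μ h R 0 := setIntegral_nonneg_of_ae (.of_forall hh)
  rcases h0.eq_or_lt with h0 | h0
  · -- total mass zero: `tailPValue` is `_ / 0 = 0` everywhere
    have huniv : {x | tailPValue μ h R x ≤ β} = univ :=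
      eq_univ_of_forall fun x => by simp [tailPValue, ← h0, hβ.1]
    rw [huniv, Measure.restrict_univ, ← tailIntegral_zero hR, ← h0, mul_zero]
  · simp_rw [tailPValue, div_le_iff₀ h0]
    exact setIntegral_tailIntegral_le hh hint hR_meas hR hcont (mul_nonneg hβ.1 h0.le)
      (mul_le_of_le_one_left h0.le hβ.2)

end TailPValue

section Exchangeable

variable {X E ι : Type*}

lemma eval_mul_eq_comp_swap [DecidableEq ι] {F : X × (ι → E) → ℝ}
    (hF : ∀ (σ : Equiv.Perm ι) p, F (p.1, p.2 ∘ σ) = F p) (u : X → E → ℝ) (i k : ι) :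
    (fun p => u p.1 (p.2 k) * F p) =
      fun p => (fun q : X × (ι → E) => u q.1 (q.2 i) * F q) (p.1, p.2 ∘ Equiv.swap i k) := by
  ext p
  simp [hF]

variable [MeasureSpace X] [MeasureSpace E] [SigmaFinite (volume : Measure X)]
  [SigmaFinite (volume : Measure E)] [Fintype ι]

lemma measurePreserving_prodCongr_arrowCongr (σ : Equiv.Perm ι) :
    MeasurePreserving ((MeasurableEquiv.refl X).prodCongr
      (MeasurableEquiv.arrowCongr' σ (MeasurableEquiv.refl E))) :=
  (MeasurePreserving.id volume).prod
    (volume_preserving_arrowCongr' σ _ (MeasurePreserving.id volume))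

variable {G : Type*} [NormedAddCommGroup G]

lemma integral_comp_perm [NormedSpace ℝ G] (σ : Equiv.Perm ι) (H : X × (ι → E) → G) :
    ∫ p : X × (ι → E), H (p.1, p.2 ∘ σ) = ∫ p, H p :=
  (measurePreserving_prodCongr_arrowCongr σ.symm).integral_comp' H

lemma integrable_comp_perm_iff (σ : Equiv.Perm ι) (H : X × (ι → E) → G) :
    Integrable (fun p : X × (ι → E) => H (p.1, p.2 ∘ σ)) ↔ Integrable H :=
  (measurePreserving_prodCongr_arrowCongr σ.symm).integrable_comp_emb
    (MeasurableEquiv.measurableEmbedding _)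

variable [DecidableEq ι] {F : X × (ι → E) → ℝ} (u : X → E → ℝ)

lemma integral_eval_mul_eq (hF : ∀ (σ : Equiv.Perm ι) p, F (p.1, p.2 ∘ σ) = F p) (i k : ι) :
    ∫ p, u p.1 (p.2 k) * F p = ∫ p, u p.1 (p.2 i) * F p := by
  rw [eval_mul_eq_comp_swap hF u i k]
  exact integral_comp_perm (Equiv.swap i k) fun q => u q.1 (q.2 i) * F q

lemma integrable_eval_mul_of_perm_invariant
    (hF : ∀ (σ : Equiv.Perm ι) p, F (p.1, p.2 ∘ σ) = F p) {i : ι}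
    (hint : Integrable fun p => u p.1 (p.2 i) * F p) (k : ι) :
    Integrable fun p => u p.1 (p.2 k) * F p := by
  rw [eval_mul_eq_comp_swap hF u i k]
  exact (integrable_comp_perm_iff _ _).mpr hint

lemma integrable_sum_eval_mul (hF : ∀ (σ : Equiv.Perm ι) p, F (p.1, p.2 ∘ σ) = F p) {i : ι}
    (hint : Integrable fun p => u p.1 (p.2 i) * F p) :
    Integrable fun p => (∑ k, u p.1 (p.2 k)) * F p := by
  simp_rw [Finset.sum_mul]
  exact integrable_finsetSum _ fun k _ => integrable_eval_mul_of_perm_invariant u hF hint k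

lemma card_mul_integral_eval_mul (hF : ∀ (σ : Equiv.Perm ι) p, F (p.1, p.2 ∘ σ) = F p)
    {i : ι} (hint : Integrable fun p => u p.1 (p.2 i) * F p) :
    Fintype.card ι * ∫ p, u p.1 (p.2 i) * F p = ∫ p, (∑ k, u p.1 (p.2 k)) * F p := by
  simp_rw [Finset.sum_mul]
  rw [integral_finsetSum _ fun k _ => integrable_eval_mul_of_perm_invariant u hF hint k]
  simp [integral_eval_mul_eq u hF i]

end Exchangeable

section SelectionPValue

variable {Ψ ι : Type*} [Fintype ι] (f : ℝ → ℝ) (S : Ψ → Set ℝ)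

/-- Its integral is the paper's `W = ∑ⱼ wⱼ`; `tailPValue volume (selectionWeight f S ψs) abs`
is `p̂_N`. -/
noncomputable def selectionWeight (ψs : ι → Ψ) (φ : ℝ) : ℝ := ∑ k, (S (ψs k)).indicator f φ

variable {f S}

lemma selectionWeight_comp_perm (ψs : ι → Ψ) (σ : Equiv.Perm ι) :
    selectionWeight f S (ψs ∘ σ) = selectionWeight f S ψs := by
  ext φ
  exact Equiv.sum_comp σ fun k => (S (ψs k)).indicator f φ

lemma selectionWeight_nonneg (hf : ∀ x, 0 ≤ f x) (ψs : ι → Ψ) (φ : ℝ) :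
    0 ≤ selectionWeight f S ψs φ :=
  Finset.sum_nonneg fun _ _ => indicator_nonneg (fun y _ => hf y) φ

lemma integrable_selectionWeight (hf : Integrable f) (hS : ∀ ψ, MeasurableSet (S ψ))
    (ψs : ι → Ψ) : Integrable (selectionWeight f S ψs) :=
  integrable_finsetSum _ fun k _ => hf.indicator (hS (ψs k))

lemma tailIntegral_selectionWeight (hf : Integrable f) (hS : ∀ ψ, MeasurableSet (S ψ))
    (ψs : ι → Ψ) (t : ℝ) :
    tailIntegral volume (selectionWeight f S ψs) abs t =
      ∑ j, ∫ y in S (ψs j) ∩ {y | t ≤ |y|}, f y := by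
  unfold tailIntegral selectionWeight
  rw [integral_finsetSum _ fun k _ => (hf.indicator (hS _)).integrableOn]
  refine Finset.sum_congr rfl fun k _ => ?_
  rw [setIntegral_indicator (hS _), inter_comm]

variable [MeasureSpace Ψ] [SigmaFinite (volume : Measure Ψ)]

lemma card_mul_setIntegral_tailPValue_le (hf_nonneg : ∀ x, 0 ≤ f x) (hf_int : Integrable f)
    (hS : ∀ ψ, MeasurableSet (S ψ)) {G : (ι → Ψ) → ℝ}
    (hG : ∀ (σ : Equiv.Perm ι) (ψs : ι → Ψ), G (ψs ∘ σ) = G ψs) {i : ι}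
    (hint : Integrable fun p : ℝ × (ι → Ψ) => (S (p.2 i)).indicator f p.1 * G p.2)
    (hcont : ∀ ψs : ι → Ψ, Continuous (tailIntegral volume (selectionWeight f S ψs) abs))
    {β : ℝ} (hβ : β ∈ Icc 0 1)
    (hmeas : MeasurableSet
      {p : ℝ × (ι → Ψ) | tailPValue volume (selectionWeight f S p.2) abs p.1 ≤ β}) :
    Fintype.card ι *
        ∫ p in {p : ℝ × (ι → Ψ) | tailPValue volume (selectionWeight f S p.2) abs p.1 ≤ β},
          (S (p.2 i)).indicator f p.1 * G p.2 =
      β * ∫ ψs, G ψs * ∫ φ, selectionWeight f S ψs φ := by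
  classical
  set P := {p : ℝ × (ι → Ψ) | tailPValue volume (selectionWeight f S p.2) abs p.1 ≤ β}
  set F := P.indicator fun p => G p.2
  have hF : ∀ (σ : Equiv.Perm ι) p, F (p.1, p.2 ∘ σ) = F p := by
    intro σ p
    simp [F, P, indicator, selectionWeight_comp_perm, hG]
  have hslice : ∀ ψs, ∫ φ, selectionWeight f S ψs φ * F (φ, ψs) =
      β * (G ψs * ∫ φ, selectionWeight f S ψs φ) := by
    intro ψs
    have hmeas_slice : MeasurableSet {φ | tailPValue volume (selectionWeight f S ψs) abs φ ≤ β} :=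
      measurable_prodMk_right hmeas
    have hindicator : (fun φ => selectionWeight f S ψs φ * F (φ, ψs)) =
        {φ | tailPValue volume (selectionWeight f S ψs) abs φ ≤ β}.indicator
          fun φ => selectionWeight f S ψs φ * G ψs := by
      ext φ
      simp [F, P, indicator]
    rw [hindicator, integral_indicator hmeas_slice, integral_mul_const,
      setIntegral_tailPValue_le (selectionWeight_nonneg hf_nonneg ψs)
        (integrable_selectionWeight hf_int hS ψs) continuous_abs.measurable abs_nonneg
        (hcont ψs) hβ]
    ring
  have hJ : ∀ p : ℝ × (ι → Ψ), P.indicator (fun p => (S (p.2 i)).indicator f p.1 * G p.2) p =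
      (S (p.2 i)).indicator f p.1 * F p := fun p => indicator_mul_right _ _ _
  have hint' : Integrable fun p : ℝ × (ι → Ψ) => (S (p.2 i)).indicator f p.1 * F p :=
    (hint.indicator hmeas).congr (.of_forall hJ)
  have hsum_int := integrable_sum_eval_mul (fun φ ψ => (S ψ).indicator f φ) hF hint'
  rw [← integral_indicator hmeas]
  simp_rw [hJ]
  rw [card_mul_integral_eval_mul (fun φ ψ => (S ψ).indicator f φ) hF hint']
  rw [Measure.volume_eq_prod] at hsum_int ⊢
  rw [integral_prod_symm _ hsum_int, ← integral_const_mul β]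
  exact integral_congr_ae (.of_forall hslice)

lemma setIntegral_tailPValue_le_div_integral (hf_nonneg : ∀ x, 0 ≤ f x)
    (hf_int : Integrable f) (hS : ∀ ψ, MeasurableSet (S ψ)) {G : (ι → Ψ) → ℝ}
    (hG : ∀ (σ : Equiv.Perm ι) (ψs : ι → Ψ), G (ψs ∘ σ) = G ψs) {i : ι}
    (hint : Integrable fun p : ℝ × (ι → Ψ) => (S (p.2 i)).indicator f p.1 * G p.2)
    (hcont : ∀ ψs : ι → Ψ, Continuous (tailIntegral volume (selectionWeight f S ψs) abs))
    (hmeas : Measurable fun p : ℝ × (ι → Ψ) =>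
      tailPValue volume (selectionWeight f S p.2) abs p.1)
    (hpos : 0 < ∫ p : ℝ × (ι → Ψ), (S (p.2 i)).indicator f p.1 * G p.2)
    {β : ℝ} (hβ : β ∈ Icc 0 1) :
    (∫ p in {p : ℝ × (ι → Ψ) | tailPValue volume (selectionWeight f S p.2) abs p.1 ≤ β},
        (S (p.2 i)).indicator f p.1 * G p.2) /
      (∫ p : ℝ × (ι → Ψ), (S (p.2 i)).indicator f p.1 * G p.2) = β := by
  have key (γ : ℝ) (hγ : γ ∈ Icc 0 1) := card_mul_setIntegral_tailPValue_le hf_nonneg hf_int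
    hS hG hint hcont hγ (measurableSet_le hmeas measurable_const)
  have h_univ : {p : ℝ × (ι → Ψ) | tailPValue volume (selectionWeight f S p.2) abs p.1 ≤ 1} =
      univ :=
    eq_univ_of_forall fun p => tailPValue_le_one (selectionWeight_nonneg hf_nonneg p.2)
      (integrable_selectionWeight hf_int hS p.2) abs_nonneg p.1
  have h_total := key 1 (right_mem_Icc.mpr zero_le_one)
  rw [h_univ, Measure.restrict_univ, one_mul] at h_total
  rw [div_eq_iff hpos.ne']
  refine mul_left_cancel₀ (Nat.cast_ne_zero.mpr (Fintype.card_pos_iff.mpr ⟨i⟩).ne' :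
    (Fintype.card ι : ℝ) ≠ 0) ?_
  rw [key β hβ, ← h_total]
  ring

end SelectionPValue

theorem stmt7_general (d N : ℕ) (hN : 0 < N)
    (f : ℝ → ℝ) (hf_nonneg : ∀ x, 0 ≤ f x)
    (hf_int : Integrable f)
    (g : (Fin d → ℝ) → ℝ)
    (S : (Fin d → ℝ) → Set ℝ) (hSmeas : ∀ ψ, MeasurableSet (S ψ))
    (J : ℝ × (Fin N → (Fin d → ℝ)) → ℝ)
    (hJ : ∀ p, J p =
      (S (p.2 ⟨0, hN⟩)).indicator (fun φ => f φ * ∏ j, g (p.2 j)) p.1)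
    (hJ_int : Integrable J)
    (hJpos : 0 < ∫ p, J p)
    (hcont : ∀ ψs : Fin N → (Fin d → ℝ),
      Continuous fun t : ℝ => ∑ j, ∫ y in S (ψs j) ∩ {y | t ≤ |y|}, f y)
    (phat : ℝ × (Fin N → (Fin d → ℝ)) → ℝ)
    (hphat : ∀ p, phat p =
      (∑ j, ∫ y in S (p.2 j) ∩ {y | |p.1| ≤ |y|}, f y) / ∑ j, ∫ y in S (p.2 j), f y)
    (hphat_meas : Measurable phat) :
    ∀ α ∈ Set.Icc (0:ℝ) 1,
      (∫ p in {p | phat p ≤ α}, J p) / (∫ p, J p) = α := by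
  intro α hα
  have hJ' : J = fun p => (S (p.2 ⟨0, hN⟩)).indicator f p.1 * ∏ j, g (p.2 j) :=
    funext fun p => by rw [hJ p, indicator_mul_left]
  have hphat' : phat = fun p => tailPValue volume (selectionWeight f S p.2) abs p.1 :=
    funext fun p => by simp [hphat, tailPValue, tailIntegral_selectionWeight hf_int hSmeas]
  subst hJ' hphat'
  exact setIntegral_tailPValue_le_div_integral (G := fun ψs => ∏ j, g (ψs j))
    hf_nonneg hf_int hSmeas (fun σ ψs => Equiv.prod_comp σ fun j => g (ψs j)) hJ_int
    (fun ψs => by simpa only [← tailIntegral_selectionWeight hf_int hSmeas] using hcont ψs)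
    hphat_meas hJpos hα

/-- Theorem 2 of the paper: the Monte Carlo post-selection p-value `p̂_N` is exactly
uniform on `[0,1]` for any `N`, when the pair `(Φ, Ψ⁽¹⁾)` has the selection-conditioned
joint density and `Ψ⁽²⁾, …, Ψ⁽ᴺ⁾` are i.i.d. from the null nuisance density `g`. -/
theorem stmt7 (d N : ℕ) (hN : 0 < N)
    (f : ℝ → ℝ) (hf_nonneg : ∀ x, 0 ≤ f x) (hf_meas : Measurable f)
    (hf_int : Integrable f) (hf_prob : ∫ x, f x = 1)
    (g : (Fin d → ℝ) → ℝ) (hg_nonneg : ∀ ψ, 0 ≤ g ψ) (hg_meas : Measurable g)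
    (hg_prob : ∫ ψ, g ψ = 1)
    (S : (Fin d → ℝ) → Set ℝ) (hSmeas : ∀ ψ, MeasurableSet (S ψ))
    (J : ℝ × (Fin N → (Fin d → ℝ)) → ℝ)
    (hJ : ∀ p, J p =
      (S (p.2 ⟨0, hN⟩)).indicator (fun φ => f φ * ∏ j, g (p.2 j)) p.1)
    (hJ_meas : Measurable J) (hJ_int : Integrable J)
    (hJpos : 0 < ∫ p, J p)
    (hcont : ∀ ψs : Fin N → (Fin d → ℝ),
      Continuous fun t : ℝ => ∑ j, ∫ y in S (ψs j) ∩ {y | t ≤ |y|}, f y)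
    (phat : ℝ × (Fin N → (Fin d → ℝ)) → ℝ)
    (hphat : ∀ p, phat p =
      (∑ j, ∫ y in S (p.2 j) ∩ {y | |p.1| ≤ |y|}, f y) / ∑ j, ∫ y in S (p.2 j), f y)
    (hphat_meas : Measurable phat) :
    ∀ α ∈ Set.Icc (0:ℝ) 1,
      (∫ p in {p | phat p ≤ α}, J p) / (∫ p, J p) = α :=
  stmt7_general d N hN f hf_nonneg hf_int g S hSmeas J hJ hJ_int hJpos hcont phat hphat hphat_meas
end
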